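/- arXiv:1708.00821 — 2 statements merged into one kernel-verified Lean document; each statement's English description precedes it below -/
import Mathlib

section
/- Let n ≥ 1, s ∈ (0,1), u₀ ∈ L¹(ℝⁿ) with total mass M = ∫_{ℝⁿ} u₀(x) dx and finite first absolute moment N₁(u₀) = ∫_{ℝⁿ} |y| |u₀(y)| dy < ∞, and let u(x,t) = ∫_{ℝⁿ} P(x−y,t;s) u₀(y) dy. Then there exists a constant C₁ = C₁(n,s) > 0 such that for all t > 0 and all x ∈ ℝⁿ, t^{n/(2s)} |u(x,t) − M·P(x,t;s)| ≤ C₁ N₁(u₀) t^{−1/(2s)}. -/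
open MeasureTheory Real Filter

/-- The fractional heat kernel `P(x,t;s)` on `ℝⁿ`: the inverse Fourier transform
in space of `ξ ↦ exp(-t |ξ|^(2s))`. -/
noncomputable def fracP (n : ℕ) (s : ℝ) (x : EuclideanSpace ℝ (Fin n)) (t : ℝ) : ℝ :=
  ((2 * π) ^ n)⁻¹ * (∫ ξ : EuclideanSpace ℝ (Fin n),
    Complex.exp (Complex.I * ((inner ℝ x ξ : ℝ) : ℂ)) *
      Complex.exp (-(t : ℂ) * ((‖ξ‖ ^ (2 * s) : ℝ) : ℂ))).re

/-- The solution of the fractional heat equation with initial datum `u₀`: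
`u(x,t) = ∫ P(x-y,t;s) u₀(y) dy`. -/
noncomputable def fracSol (n : ℕ) (s : ℝ) (u₀ : EuclideanSpace ℝ (Fin n) → ℝ)
    (x : EuclideanSpace ℝ (Fin n)) (t : ℝ) : ℝ :=
  ∫ y, fracP n s (x - y) t * u₀ y

/-! Since `M P(x,t) = ∫ P(x,t) u₀(y) dy`, the difference `u(x,t) - M P(x,t)` equals
`∫ (P(x-y,t) - P(x,t)) u₀(y) dy`. From `|e^{ia} - e^{ib}| ≤ |a - b|`, the kernel is Lipschitz in
`x` with constant `(2π)^{-n} ∫ |ξ| e^{-t|ξ|^{2s}} dξ`, and the substitution `ξ = t^{-1/(2s)} η`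
shows that this constant is `t^{-(n+1)/(2s)}` times its value at `t = 1`. Hence
`|u(x,t) - M P(x,t)| ≤ C t^{-(n+1)/(2s)} N₁(u₀)`. -/

open scoped InnerProductSpace

theorem norm_cexp_I_mul_sub_cexp_I_mul_le (a b : ℝ) :
    ‖Complex.exp (Complex.I * a) - Complex.exp (Complex.I * b)‖ ≤ |a - b| := by
  have hfactor : Complex.exp (Complex.I * a) - Complex.exp (Complex.I * b) =
      (Complex.exp (Complex.I * (a - b : ℝ)) - 1) * Complex.exp (Complex.I * b) := by
    rw [sub_mul, one_mul, ← Complex.exp_add]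
    push_cast
    ring_nf
  rw [hfactor, norm_mul, Complex.norm_exp_I_mul_ofReal, mul_one]
  exact Real.norm_exp_I_mul_ofReal_sub_one_le

section FourierLipschitz

variable {E : Type*} [NormedAddCommGroup E] [InnerProductSpace ℝ E] [MeasurableSpace E]
  [OpensMeasurableSpace E] {μ : Measure E}

theorem norm_integral_cexp_inner_mul_sub_le {g : E → ℂ} (hg : Integrable g μ)
    (hg₁ : Integrable (fun ξ => ‖ξ‖ * ‖g ξ‖) μ) (x y : E) :
    ‖(∫ ξ, Complex.exp (Complex.I * ⟪x, ξ⟫_ℝ) * g ξ ∂μ) -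
        ∫ ξ, Complex.exp (Complex.I * ⟪y, ξ⟫_ℝ) * g ξ ∂μ‖ ≤
      (∫ ξ, ‖ξ‖ * ‖g ξ‖ ∂μ) * ‖x - y‖ := by
  have hint (z : E) : Integrable (fun ξ => Complex.exp (Complex.I * ⟪z, ξ⟫_ℝ) * g ξ) μ :=
    hg.bdd_mul (c := 1) (by fun_prop) (ae_of_all _ fun ξ => by
      rw [Complex.norm_exp_I_mul_ofReal])
  rw [← integral_sub (hint x) (hint y), ← integral_mul_const]
  refine norm_integral_le_of_norm_le (hg₁.mul_const _) (ae_of_all _ fun ξ => ?_)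
  rw [← sub_mul, norm_mul]
  calc _ ≤ |⟪x, ξ⟫_ℝ - ⟪y, ξ⟫_ℝ| * ‖g ξ‖ := by
        gcongr
        exact norm_cexp_I_mul_sub_cexp_I_mul_le _ _
    _ ≤ (‖x - y‖ * ‖ξ‖) * ‖g ξ‖ := by
        gcongr
        rw [← inner_sub_left]
        exact abs_real_inner_le_norm _ _
    _ = ‖ξ‖ * ‖g ξ‖ * ‖x - y‖ := by ring

end FourierLipschitz

section RadialWeights

variable {E : Type*} [NormedAddCommGroup E] [NormedSpace ℝ E] [FiniteDimensional ℝ E]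
  [MeasurableSpace E] [BorelSpace E] (μ : Measure E) [μ.IsAddHaarMeasure]

theorem integrable_norm_rpow_mul_exp_neg_mul_norm_rpow {p q t : ℝ} (hp : 0 < p) (hq : -1 < q)
    (ht : 0 < t) : Integrable (fun ξ : E => ‖ξ‖ ^ q * exp (-(t * ‖ξ‖ ^ p))) μ := by
  rcases subsingleton_or_nontrivial E with hE | hE
  · exact Integrable.of_finite
  · rw [integrable_fun_norm_addHaar μ (f := fun r => r ^ q * exp (-(t * r ^ p)))]
    have hexp : -1 < ((Module.finrank ℝ E - 1 : ℕ) : ℝ) + q := by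
      have := (Module.finrank ℝ E - 1).cast_nonneg (α := ℝ)
      linarith
    refine (integrableOn_rpow_mul_exp_neg_mul_rpow hexp hp ht).congr_fun
      (fun r (hr : 0 < r) => ?_) measurableSet_Ioi
    beta_reduce
    rw [smul_eq_mul, Real.rpow_add hr, Real.rpow_natCast, neg_mul, mul_assoc]

theorem integral_norm_rpow_mul_exp_neg_mul_norm_rpow {p t : ℝ} (q : ℝ) (hp : 0 < p)
    (ht : 0 < t) :
    ∫ ξ : E, ‖ξ‖ ^ q * exp (-(t * ‖ξ‖ ^ p)) ∂μ =
      t ^ (-(Module.finrank ℝ E + q) / p) * ∫ ξ : E, ‖ξ‖ ^ q * exp (-‖ξ‖ ^ p) ∂μ := by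
  set c : ℝ := t ^ (-p⁻¹) with hc
  have hc₀ : 0 < c := by positivity
  have htc : t * c ^ p = 1 := by
    rw [hc, ← Real.rpow_mul ht.le, neg_mul, inv_mul_cancel₀ hp.ne', Real.rpow_neg_one,
      mul_inv_cancel₀ ht.ne']
  have hsubst := μ.integral_comp_smul (fun ξ : E => ‖ξ‖ ^ q * exp (-(t * ‖ξ‖ ^ p))) c
  have hscaled : ∀ ξ : E, ‖c • ξ‖ ^ q * exp (-(t * ‖c • ξ‖ ^ p)) =
      c ^ q * (‖ξ‖ ^ q * exp (-‖ξ‖ ^ p)) := fun ξ => by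
    rw [norm_smul, Real.norm_of_nonneg hc₀.le, Real.mul_rpow hc₀.le (norm_nonneg ξ),
      Real.mul_rpow hc₀.le (norm_nonneg ξ), ← mul_assoc t, htc, one_mul, mul_assoc]
  simp only [hscaled, integral_const_mul, smul_eq_mul] at hsubst
  rw [abs_of_pos (by positivity)] at hsubst
  have hpow : t ^ (-(Module.finrank ℝ E + q) / p) = c ^ Module.finrank ℝ E * c ^ q := by
    rw [hc, ← Real.rpow_natCast, ← Real.rpow_mul ht.le, ← Real.rpow_mul ht.le,
      ← Real.rpow_add ht]
    ring_nf
  rw [hpow, mul_assoc, hsubst, ← mul_assoc, mul_inv_cancel₀ (by positivity), one_mul]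

end RadialWeights

theorem abs_fracP_sub_fracP_le (n : ℕ) {s t : ℝ} (hs : 0 < s) (ht : 0 < t)
    (z w : EuclideanSpace ℝ (Fin n)) :
    |fracP n s z t - fracP n s w t| ≤
      ((2 * π) ^ n)⁻¹ * (∫ ξ : EuclideanSpace ℝ (Fin n), ‖ξ‖ * exp (-(t * ‖ξ‖ ^ (2 * s)))) *
        ‖z - w‖ := by
  set g : EuclideanSpace ℝ (Fin n) → ℂ :=
    fun ξ => Complex.exp (-(t : ℂ) * ((‖ξ‖ ^ (2 * s) : ℝ) : ℂ))
  have hg_norm (ξ : EuclideanSpace ℝ (Fin n)) : ‖g ξ‖ = exp (-(t * ‖ξ‖ ^ (2 * s))) := by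
    simp [g, Complex.norm_exp]
  have hp : 0 < 2 * s := by positivity
  have hg : Integrable g := by
    refine (integrable_norm_iff (by fun_prop)).mp ?_
    simpa [hg_norm] using
      integrable_norm_rpow_mul_exp_neg_mul_norm_rpow volume hp (by norm_num : (-1 : ℝ) < 0) ht
  have hg₁ : Integrable (fun ξ => ‖ξ‖ * ‖g ξ‖) := by
    simpa [hg_norm] using
      integrable_norm_rpow_mul_exp_neg_mul_norm_rpow volume hp (by norm_num : (-1 : ℝ) < 1) ht
  have hF := norm_integral_cexp_inner_mul_sub_le hg hg₁ z w
  simp only [hg_norm] at hF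
  rw [fracP, fracP, ← mul_sub, ← Complex.sub_re, abs_mul, abs_of_pos (by positivity), mul_assoc]
  gcongr
  exact (Complex.abs_re_le_norm _).trans hF

theorem abs_integral_comp_sub_mul_sub_integral_mul_le {E : Type*} [NormedAddCommGroup E]
    [MeasurableSpace E] [OpensMeasurableSpace E] {μ : Measure E} {f : E → ℝ} {L : ℝ}
    (hf : ∀ z w, |f z - f w| ≤ L * ‖z - w‖) {u : E → ℝ} (hu : Integrable u μ)
    (hmom : Integrable (fun y => ‖y‖ * u y) μ) (x : E) :
    |∫ y, f (x - y) * u y ∂μ - (∫ y, u y ∂μ) * f x| ≤ L * ∫ y, ‖y‖ * |u y| ∂μ := by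
  have hf_cont : Continuous f :=
    (LipschitzWith.of_dist_le' (K := L) fun z w => by
      rw [Real.dist_eq, dist_eq_norm]
      exact hf z w).continuous
  have hmom' : Integrable (fun y => ‖y‖ * |u y|) μ := by
    simpa only [norm_mul, norm_norm, Real.norm_eq_abs, abs_norm] using hmom.norm
  have hbound (y : E) : ‖(f (x - y) - f x) * u y‖ ≤ L * (‖y‖ * |u y|) := by
    rw [norm_mul, Real.norm_eq_abs, Real.norm_eq_abs, ← mul_assoc]
    gcongr
    simpa using hf (x - y) x
  have hdiff : Integrable (fun y => (f (x - y) - f x) * u y) μ :=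
    (hmom'.const_mul L).mono' ((by fun_prop : Continuous fun y => f (x - y) - f x)
      |>.aestronglyMeasurable.mul hu.1) (ae_of_all _ hbound)
  have hsplit : ∫ y, f (x - y) * u y ∂μ - (∫ y, u y ∂μ) * f x =
      ∫ y, (f (x - y) - f x) * u y ∂μ := by
    have hprod : Integrable (fun y => f (x - y) * u y) μ :=
      (hdiff.add (hu.mul_const (f x))).congr
        (ae_of_all _ fun y => by simp only [Pi.add_apply]; ring)
    rw [← integral_mul_const, ← integral_sub hprod (hu.mul_const _)]
    congr 1 with y
    ring
  rw [hsplit, ← integral_const_mul, ← Real.norm_eq_abs]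
  exact norm_integral_le_of_norm_le (hmom'.const_mul L) (ae_of_all _ hbound)

theorem fracHeat_pointwise_rate_finite_first_moment_general
    (n : ℕ) (s : ℝ) (hs : s ∈ Set.Ioo (0:ℝ) 1)
    (u₀ : EuclideanSpace ℝ (Fin n) → ℝ) (hu₀ : Integrable u₀)
    (hmom : Integrable (fun y => ‖y‖ * u₀ y))
    (M : ℝ) (hM : M = ∫ x, u₀ x) :
    ∃ C₁ > (0:ℝ), ∀ t > (0:ℝ), ∀ x : EuclideanSpace ℝ (Fin n),
      t ^ ((n : ℝ) / (2 * s)) * |fracSol n s u₀ x t - M * fracP n s x t| ≤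
        C₁ * (∫ y, ‖y‖ * |u₀ y|) * t ^ (-1 / (2 * s)) := by
  have hs₀ : 0 < s := hs.1
  set K := ∫ ξ : EuclideanSpace ℝ (Fin n), ‖ξ‖ * exp (-‖ξ‖ ^ (2 * s))
  have hK : 0 ≤ K := integral_nonneg fun ξ => by positivity
  refine ⟨((2 * π) ^ n)⁻¹ * K + 1, by positivity, fun t ht x => ?_⟩
  have hJ : ∫ ξ : EuclideanSpace ℝ (Fin n), ‖ξ‖ * exp (-(t * ‖ξ‖ ^ (2 * s))) =
      t ^ (-(n + 1) / (2 * s)) * K := by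
    have := integral_norm_rpow_mul_exp_neg_mul_norm_rpow
      (volume : Measure (EuclideanSpace ℝ (Fin n))) 1 (p := 2 * s) (by positivity) ht
    simpa only [rpow_one, finrank_euclideanSpace_fin] using this
  have hdiff := abs_integral_comp_sub_mul_sub_integral_mul_le (abs_fracP_sub_fracP_le n hs₀ ht)
    hu₀ hmom x
  rw [hJ, ← hM] at hdiff
  have hpow : t ^ ((n : ℝ) / (2 * s)) * t ^ (-(n + 1) / (2 * s)) = t ^ (-1 / (2 * s)) := by
    rw [← rpow_add ht]
    ring_nf
  calc t ^ ((n : ℝ) / (2 * s)) * |fracSol n s u₀ x t - M * fracP n s x t|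
      ≤ t ^ ((n : ℝ) / (2 * s)) *
          (((2 * π) ^ n)⁻¹ * (t ^ (-(n + 1) / (2 * s)) * K) * ∫ y, ‖y‖ * |u₀ y|) := by
        gcongr
        exact hdiff
    _ = ((2 * π) ^ n)⁻¹ * K * (∫ y, ‖y‖ * |u₀ y|) * t ^ (-1 / (2 * s)) := by
        rw [← hpow]
        ring
    _ ≤ (((2 * π) ^ n)⁻¹ * K + 1) * (∫ y, ‖y‖ * |u₀ y|) * t ^ (-1 / (2 * s)) := by
        gcongr
        linarith

theorem fracHeat_pointwise_rate_finite_first_moment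
    (n : ℕ) (hn : 1 ≤ n) (s : ℝ) (hs : s ∈ Set.Ioo (0:ℝ) 1)
    (u₀ : EuclideanSpace ℝ (Fin n) → ℝ) (hu₀ : Integrable u₀)
    (hmom : Integrable (fun y => ‖y‖ * u₀ y))
    (M : ℝ) (hM : M = ∫ x, u₀ x) :
    ∃ C₁ > (0:ℝ), ∀ t > (0:ℝ), ∀ x : EuclideanSpace ℝ (Fin n),
      t ^ ((n : ℝ) / (2 * s)) * |fracSol n s u₀ x t - M * fracP n s x t| ≤
        C₁ * (∫ y, ‖y‖ * |u₀ y|) * t ^ (-1 / (2 * s)) :=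
  fracHeat_pointwise_rate_finite_first_moment_general n s hs u₀ hu₀ hmom M hM
end

section
/- Let n ≥ 1 and s ∈ (0,1), and let u₀ : ℝⁿ → [0,∞) be a nonnegative locally integrable function with ∫_{ℝⁿ} u₀(x) dx = +∞. Define u(x,t) = ∫_{ℝⁿ} P(x−y,t;s) u₀(y) dy (a well-defined value in [0,∞]). Then for every x ∈ ℝⁿ, lim_{t→∞} t^{n/(2s)} u(x,t) = +∞. In particular, convergence to a multiple of the fundamental solution fails for all nonnegative data of infinite mass. -/
/-!
Rescaling `ξ ↦ t ^ (-1/(2s)) • ξ` in the Fourier integral gives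
`t ^ (n/(2s)) * P(z, t) = P(t ^ (-1/(2s)) • z, 1)`. As `P(·, 1)` is continuous with `P(0, 1) > 0`,
for large `t` the rescaled kernel `t ^ (n/(2s)) * P(x - y, t)` is at least `P(0, 1) / 2` uniformly
for `y` in any ball around `x`, so `t ^ (n/(2s)) * u(x, t)` eventually exceeds `P(0, 1) / 2` times
the mass of `u₀` in that ball, which is unbounded in the radius.
-/

open MeasureTheory Real Filter

open Metric Set Topology

theorem integrable_exp_neg_mul_norm_rpow {E : Type*} [NormedAddCommGroup E] [NormedSpace ℝ E]
    [FiniteDimensional ℝ E] [MeasurableSpace E] [BorelSpace E] (μ : Measure E)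
    [μ.IsAddHaarMeasure] {b p : ℝ} (hb : 0 < b) (hp : 0 < p) :
    Integrable (fun x : E => rexp (-b * ‖x‖ ^ p)) μ := by
  rcases subsingleton_or_nontrivial E with _ | _
  · exact .of_finite
  rw [integrable_fun_norm_addHaar μ (f := fun r => rexp (-b * r ^ p))]
  refine (integrableOn_rpow_mul_exp_neg_mul_rpow (s := (Module.finrank ℝ E - 1 : ℕ))
    (neg_one_lt_zero.trans_le (Nat.cast_nonneg _)) hp hb).congr_fun (fun r _ => ?_)
    measurableSet_Ioi
  simp [Real.rpow_natCast]

theorem tendsto_setLIntegral_ball_atTop {α : Type*} [PseudoMetricSpace α] [MeasurableSpace α]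
    [OpensMeasurableSpace α] (μ : Measure α) (f : α → ENNReal) (a : α) :
    Tendsto (fun r : ℝ => ∫⁻ y in ball a r, f y ∂μ) atTop (𝓝 (∫⁻ y, f y ∂μ)) := by
  have hUnion : ⋃ r : ℝ, ball a r = univ :=
    eq_univ_of_forall fun y => mem_iUnion.2 ⟨dist y a + 1, by simp [mem_ball]⟩
  -- continuity from below of `μ.withDensity f`, which needs no measurability of `f`
  have h := tendsto_measure_iUnion_atTop (μ := μ.withDensity f)
    (fun r r' (h : r ≤ r') => ball_subset_ball (x := a) h)
  rw [hUnion, withDensity_apply _ MeasurableSet.univ, Measure.restrict_univ] at h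
  exact h.congr fun r => withDensity_apply _ measurableSet_ball

theorem tendsto_lintegral_ofReal_mul_top_of_lintegral_eq_top {α ι : Type*}
    [PseudoMetricSpace α] [MeasurableSpace α] [OpensMeasurableSpace α] {μ : Measure α}
    {l : Filter ι} {K : ι → α → ℝ} {f : α → ℝ} {a : α} {c : ℝ} (hc : 0 < c)
    (hK : ∀ r, ∀ᶠ i in l, ∀ y ∈ ball a r, c ≤ K i y) (hf : ∫⁻ y, ENNReal.ofReal (f y) ∂μ = ⊤) :
    Tendsto (fun i => ∫⁻ y, ENNReal.ofReal (K i y * f y) ∂μ) l (𝓝 ⊤) := by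
  have hball : Tendsto (fun r => ENNReal.ofReal c * ∫⁻ y in ball a r, ENNReal.ofReal (f y) ∂μ)
      atTop (𝓝 ⊤) := by
    have h := ENNReal.Tendsto.const_mul (tendsto_setLIntegral_ball_atTop μ
      (fun y => ENNReal.ofReal (f y)) a) (Or.inr (ENNReal.ofReal_ne_top (r := c)))
    rwa [hf, ENNReal.mul_top (by simpa using hc)] at h
  refine ENNReal.tendsto_nhds_top fun N => ?_
  obtain ⟨r, hr⟩ := (hball.eventually (lt_mem_nhds (ENNReal.natCast_lt_top N))).exists
  filter_upwards [hK r] with i hi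
  calc (N : ENNReal) < ENNReal.ofReal c * ∫⁻ y in ball a r, ENNReal.ofReal (f y) ∂μ := hr
    _ = ∫⁻ y in ball a r, ENNReal.ofReal c * ENNReal.ofReal (f y) ∂μ :=
      (lintegral_const_mul' _ _ ENNReal.ofReal_ne_top).symm
    _ ≤ ∫⁻ y in ball a r, ENNReal.ofReal (K i y * f y) ∂μ := by
      refine setLIntegral_mono' measurableSet_ball fun y hy => ?_
      rcases le_total 0 (f y) with hfy | hfy
      · rw [← ENNReal.ofReal_mul hc.le]
        exact ENNReal.ofReal_le_ofReal (mul_le_mul_of_nonneg_right (hi y hy) hfy)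
      · simp [ENNReal.ofReal_eq_zero.2 hfy]
    _ ≤ ∫⁻ y, ENNReal.ofReal (K i y * f y) ∂μ := setLIntegral_le_lintegral _ _

theorem rpow_mul_fracP {n : ℕ} {s t : ℝ} (hs : 0 < s) (ht : 0 < t)
    (z : EuclideanSpace ℝ (Fin n)) :
    t ^ ((n : ℝ) / (2 * s)) * fracP n s z t = fracP n s (t ^ (-(1 / (2 * s))) • z) 1 := by
  set c := t ^ (1 / (2 * s)) with hc_def
  have hc : 0 < c := rpow_pos_of_pos ht _
  have hct : c ^ (2 * s) = t := by
    rw [hc_def, ← rpow_mul ht.le, one_div_mul_cancel (by positivity), rpow_one]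
  have hcn : t ^ ((n : ℝ) / (2 * s)) = c ^ n := by
    rw [hc_def, ← rpow_natCast, ← rpow_mul ht.le, one_div_mul_eq_div]
  rw [hcn, rpow_neg ht.le, ← hc_def]
  set G : EuclideanSpace ℝ (Fin n) → ℂ := fun η =>
    Complex.exp (Complex.I * ((inner ℝ (c⁻¹ • z) η : ℝ) : ℂ)) *
      Complex.exp (-((1 : ℝ) : ℂ) * ((‖η‖ ^ (2 * s) : ℝ) : ℂ))
  have hG : ∀ ξ, G (c • ξ) = Complex.exp (Complex.I * ((inner ℝ z ξ : ℝ) : ℂ)) *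
      Complex.exp (-(t : ℂ) * ((‖ξ‖ ^ (2 * s) : ℝ) : ℂ)) := by
    intro ξ
    simp only [G, inner_smul_left, inner_smul_right, norm_smul, norm_of_nonneg hc.le,
      mul_rpow hc.le (norm_nonneg _), hct]
    simp [inv_mul_cancel_left₀ hc.ne']
  have hscale := Measure.integral_comp_smul_of_nonneg volume G c (hR := hc.le)
  simp only [hG, finrank_euclideanSpace_fin] at hscale
  rw [fracP, fracP, hscale, Complex.real_smul, Complex.re_ofReal_mul, mul_left_comm,
    mul_inv_cancel_left₀ (pow_ne_zero n hc.ne')]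

theorem norm_fracP_integrand {n : ℕ} (s t : ℝ) (z ξ : EuclideanSpace ℝ (Fin n)) :
    ‖Complex.exp (Complex.I * ((inner ℝ z ξ : ℝ) : ℂ)) *
      Complex.exp (-(t : ℂ) * ((‖ξ‖ ^ (2 * s) : ℝ) : ℂ))‖ = rexp (-t * ‖ξ‖ ^ (2 * s)) := by
  simp [Complex.norm_exp, ← Complex.ofReal_mul, ← Complex.ofReal_neg]

theorem continuous_fracP {n : ℕ} {s t : ℝ} (hs : 0 < s) (ht : 0 < t) :
    Continuous fun z => fracP n s z t := by
  refine continuous_const.mul (Complex.continuous_re.comp (continuous_of_dominated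
    (fun z => Continuous.aestronglyMeasurable ?_) (fun z => .of_forall fun ξ => ?_)
    (integrable_exp_neg_mul_norm_rpow volume ht (by positivity : 0 < 2 * s))
    (.of_forall fun ξ => ?_)))
  · fun_prop (disch := positivity)
  · exact (norm_fracP_integrand s t z ξ).le
  · fun_prop (disch := positivity)

theorem fracP_zero_pos {n : ℕ} {s t : ℝ} (hs : 0 < s) (ht : 0 < t) : 0 < fracP n s 0 t := by
  have hreal : ∀ ξ : EuclideanSpace ℝ (Fin n),
      Complex.exp (Complex.I * ((inner ℝ (0 : EuclideanSpace ℝ (Fin n)) ξ : ℝ) : ℂ)) *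
        Complex.exp (-(t : ℂ) * ((‖ξ‖ ^ (2 * s) : ℝ) : ℂ)) = (rexp (-t * ‖ξ‖ ^ (2 * s)) : ℂ) := by
    intro ξ
    simp [Complex.ofReal_exp]
  rw [fracP, integral_congr_ae (.of_forall hreal), integral_complex_ofReal, Complex.ofReal_re]
  exact mul_pos (by positivity)
    (integral_exp_pos (integrable_exp_neg_mul_norm_rpow volume ht (by positivity : 0 < 2 * s)))

theorem eventually_half_fracP_zero_le_rpow_mul_fracP {n : ℕ} {s : ℝ} (hs : 0 < s) (R : ℝ) :
    ∀ᶠ t in atTop, ∀ z ∈ ball (0 : EuclideanSpace ℝ (Fin n)) R,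
      fracP n s 0 1 / 2 ≤ t ^ ((n : ℝ) / (2 * s)) * fracP n s z t := by
  have hsmall : Tendsto (fun p : ℝ × EuclideanSpace ℝ (Fin n) => p.1 ^ (-(1 / (2 * s))) • p.2)
      (atTop ×ˢ 𝓟 (ball 0 R)) (𝓝 0) :=
    ((tendsto_rpow_neg_atTop (by positivity)).comp tendsto_fst).zero_smul_isBoundedUnder_le
      (isBoundedUnder_of_eventually_le (a := R) (eventually_prod_principal_iff.2
        (.of_forall fun _ z hz => (mem_ball_zero_iff.1 hz).le)))
  have hclose := hsmall.eventually (((continuous_fracP hs one_pos).tendsto 0).eventually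
    (lt_mem_nhds (half_lt_self (fracP_zero_pos (n := n) hs one_pos))))
  filter_upwards [eventually_gt_atTop 0, eventually_prod_principal_iff.1 hclose]
    with t ht hclose_t z hz
  rw [rpow_mul_fracP hs ht]
  exact (hclose_t z hz).le

theorem fracHeat_infinite_mass_divergence_general
    (n : ℕ) (s : ℝ) (hs : s ∈ Set.Ioo (0:ℝ) 1)
    (u₀ : EuclideanSpace ℝ (Fin n) → ℝ)
    (hmass : ∫⁻ x, ENNReal.ofReal (u₀ x) = ⊤) :
    ∀ x : EuclideanSpace ℝ (Fin n),
      Tendsto (fun t : ℝ => ENNReal.ofReal (t ^ ((n : ℝ) / (2 * s))) *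
          ∫⁻ y, ENNReal.ofReal (fracP n s (x - y) t * u₀ y))
        atTop (nhds ⊤) := by
  intro x
  have hkernel : ∀ R, ∀ᶠ t in atTop, ∀ y ∈ ball x R,
      fracP n s 0 1 / 2 ≤ t ^ ((n : ℝ) / (2 * s)) * fracP n s (x - y) t := fun R => by
    filter_upwards [eventually_half_fracP_zero_le_rpow_mul_fracP hs.1 R] with t ht y hy
    exact ht (x - y) (by rwa [mem_ball_zero_iff, ← dist_eq_norm, dist_comm])
  refine (tendsto_lintegral_ofReal_mul_top_of_lintegral_eq_top
    (half_pos (fracP_zero_pos hs.1 one_pos)) hkernel hmass).congr' ?_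
  filter_upwards [eventually_ge_atTop 0] with t ht
  rw [← lintegral_const_mul' _ _ ENNReal.ofReal_ne_top]
  simp_rw [← ENNReal.ofReal_mul (rpow_nonneg ht _), mul_assoc]

theorem fracHeat_infinite_mass_divergence
    (n : ℕ) (hn : 1 ≤ n) (s : ℝ) (hs : s ∈ Set.Ioo (0:ℝ) 1)
    (u₀ : EuclideanSpace ℝ (Fin n) → ℝ) (h0 : ∀ x, 0 ≤ u₀ x)
    (hloc : LocallyIntegrable u₀)
    (hmass : ∫⁻ x, ENNReal.ofReal (u₀ x) = ⊤) :
    ∀ x : EuclideanSpace ℝ (Fin n),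
      Tendsto (fun t : ℝ => ENNReal.ofReal (t ^ ((n : ℝ) / (2 * s))) *
          ∫⁻ y, ENNReal.ofReal (fracP n s (x - y) t * u₀ y))
        atTop (nhds ⊤) :=
  fracHeat_infinite_mass_divergence_general n s hs u₀ hmass
end
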